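/- Let $n \ge 1$, let $C$ be the Cartan matrix of type $A_n$, and let $Z \in \mathbb{C}^n$ with $Z_i \ne 0$ for all $i$. Define $\mathrm{vol}(Z) = \left| \sum_{i,j=1}^n (C^{-1})_{ij} Z_i \overline{Z_j} \right|$ and $\mathrm{sys}(Z) = \min_{1 \le i \le n} |Z_i|$. Then $\mathrm{sys}(Z)^2 \le \frac{n+1}{n} \mathrm{vol}(Z)$. -/

import Mathlib

open Matrix Finset

/-- The Cartan matrix of type `Aₙ`, over the complex numbers. -/
def cartanA (n : ℕ) : Matrix (Fin n) (Fin n) ℂ :=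
  Matrix.of fun i j =>
    if i = j then 2 else if i.val + 1 = j.val ∨ j.val + 1 = i.val then -1 else 0

/-!
Realise the root system `Aₙ` in the hyperplane `∑ xₖ = 0` of `ℂⁿ⁺¹`: the simple roots are
`αᵢ = εᵢ - εᵢ₊₁` and the fundamental weights `ωᵢ` are dual to them, so `C ω = α` and
`C⁻¹ = (⟨ωᵢ, ωⱼ⟩)` is a Gram matrix. Hence `vol(Z) = ‖W‖²` for `W = ∑ Zᵢ ωᵢ`, a vector with
coordinate sum zero whose consecutive differences are `Wᵢ - Wᵢ₊₁ = ⟨αᵢ, W⟩ = Zᵢ`. For such a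
vector `(n + 1) ‖W‖² = ∑_{k < l} |Wₖ - Wₗ|²`, and keeping only the adjacent pairs gives
`(n + 1) vol(Z) ≥ ∑ |Zᵢ|² ≥ n sys(Z)²`.
-/

section Variance

variable {E : Type*} [NormedAddCommGroup E] [InnerProductSpace ℝ E]

theorem sum_sum_norm_sub_sq {ι : Type*} [Fintype ι] (W : ι → E) :
    ∑ k, ∑ l, ‖W k - W l‖ ^ 2 =
      2 * Fintype.card ι * ∑ k, ‖W k‖ ^ 2 - 2 * ‖∑ k, W k‖ ^ 2 := by
  have hinner : ∑ k, ∑ l, inner ℝ (W k) (W l) = ‖∑ k, W k‖ ^ 2 := by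
    rw [← real_inner_self_eq_norm_sq, sum_inner]
    simp only [inner_sum]
  simp only [norm_sub_sq_real, sum_add_distrib, sum_sub_distrib, ← mul_sum, sum_const,
    card_univ, nsmul_eq_mul, hinner]
  ring

theorem sum_castSucc_succ_le_sum_sum {n : ℕ} (f : Fin (n + 1) → Fin (n + 1) → ℝ)
    (hf : ∀ k l, 0 ≤ f k l) :
    ∑ i : Fin n, (f i.castSucc i.succ + f i.succ i.castSucc) ≤ ∑ k, ∑ l, f k l := by
  let adjacent : Fin n ⊕ Fin n → Fin (n + 1) × Fin (n + 1) :=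
    Sum.elim (fun i => (i.castSucc, i.succ)) (fun i => (i.succ, i.castSucc))
  have hinj : adjacent.Injective := by
    rintro (i | i) (j | j) h <;>
      simp only [adjacent, Sum.elim_inl, Sum.elim_inr, Sum.inl.injEq, Sum.inr.injEq, reduceCtorEq,
        Prod.ext_iff, Fin.ext_iff, Fin.val_castSucc, Fin.val_succ] at h ⊢ <;> omega
  calc ∑ i : Fin n, (f i.castSucc i.succ + f i.succ i.castSucc)
      = ∑ p ∈ univ.map ⟨adjacent, hinj⟩, f p.1 p.2 := by
        rw [sum_map, Fintype.sum_sum_type, ← sum_add_distrib]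
        rfl
    _ ≤ ∑ p : Fin (n + 1) × Fin (n + 1), f p.1 p.2 :=
        sum_le_univ_sum_of_nonneg fun p => hf p.1 p.2
    _ = ∑ k, ∑ l, f k l := Fintype.sum_prod_type _

theorem sum_norm_castSucc_sub_succ_sq_le {n : ℕ} (W : Fin (n + 1) → E) (hW : ∑ k, W k = 0) :
    ∑ i : Fin n, ‖W i.castSucc - W i.succ‖ ^ 2 ≤ (n + 1) * ∑ k, ‖W k‖ ^ 2 := by
  have h := sum_castSucc_succ_le_sum_sum (fun k l => ‖W k - W l‖ ^ 2) fun _ _ => by positivity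
  have hsymm : ∀ i : Fin n, ‖W i.succ - W i.castSucc‖ = ‖W i.castSucc - W i.succ‖ :=
    fun i => norm_sub_rev _ _
  simp only [hsymm, ← two_mul, ← mul_sum, sum_sum_norm_sub_sq, hW, norm_zero,
    Fintype.card_fin] at h
  push_cast at h
  linarith

end Variance

/-- Column `i` is `ωᵢ = ε₀ + ⋯ + εᵢ - (i + 1)/(n + 1) ∑ₖ εₖ` (indices from `0`). -/
noncomputable def fundamentalWeightA (n : ℕ) : Matrix (Fin (n + 1)) (Fin n) ℂ :=
  of fun k i => (if k ≤ i.castSucc then 1 else 0) - (i.val + 1) / (n + 1)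

def simpleRootA (n : ℕ) : Matrix (Fin (n + 1)) (Fin n) ℂ :=
  of fun k i => (if k = i.castSucc then 1 else 0) - (if k = i.succ then 1 else 0)

theorem cartanA_mulVec_apply {n : ℕ} (f : ℕ → ℂ) (h0 : f 0 = 0) (hn : f (n + 1) = 0)
    (i : Fin n) :
    (cartanA n *ᵥ fun j => f (j.val + 1)) i = 2 * f (i + 1) - f i - f (i + 2) := by
  let g : ℕ → ℂ := fun j => 2 * (if i.val = j then f (j + 1) else 0)
    - (if i.val + 1 = j then f (j + 1) else 0) - (if i.val = j + 1 then f (j + 1) else 0)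
  have hterm : ∀ j : Fin n, cartanA n i j * f (j.val + 1) = g j := by
    intro j
    simp only [cartanA, of_apply, g, Fin.ext_iff]
    split_ifs <;> first | omega | ring
  have hright : ∑ j ∈ range n, (if i.val + 1 = j then f (j + 1) else 0) = f (i + 2) := by
    rw [sum_ite_eq]
    split_ifs with h
    · rfl
    · rw [mem_range] at h
      rw [show i.val + 2 = n + 1 by omega, hn]
  have hleft : ∑ j ∈ range n, (if i.val = j + 1 then f (j + 1) else 0) = f i := by
    have := sum_range_succ' (fun j => if i.val = j then f j else 0) n
    rw [sum_ite_eq, if_pos (mem_range.2 (by omega))] at this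
    simpa only [h0, ite_self, add_zero, eq_comm] using this
  rw [mulVec, dotProduct, sum_congr rfl fun j _ => hterm j, Fin.sum_univ_eq_sum_range g]
  simp only [g, sum_sub_distrib, ← mul_sum, sum_ite_eq, mem_range, if_pos i.isLt, hright, hleft]
  ring

theorem cartanA_mul_fundamentalWeightA_transpose (n : ℕ) :
    cartanA n * (fundamentalWeightA n)ᵀ = (simpleRootA n)ᵀ := by
  ext i k
  let g : ℕ → ℂ := fun a => (if k.val + 1 ≤ a then 1 else 0) - a / (n + 1)
  have hcol : (fun j => (fundamentalWeightA n)ᵀ j k) = fun j : Fin n => g (j.val + 1) := by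
    ext j
    simp only [transpose_apply, fundamentalWeightA, of_apply, g, Fin.le_def, Fin.val_castSucc]
    push_cast
    split_ifs <;> first | omega | ring
  have h0 : g 0 = 0 := by simp [g]
  have hn : g (n + 1) = 0 := by
    simp only [g]
    rw [if_pos (show k.val + 1 ≤ n + 1 from k.isLt)]
    push_cast
    field_simp
    ring
  change (cartanA n *ᵥ fun j => (fundamentalWeightA n)ᵀ j k) i = _
  rw [hcol, cartanA_mulVec_apply g h0 hn]
  simp only [g, simpleRootA, transpose_apply, of_apply, Fin.ext_iff, Fin.val_castSucc, Fin.val_succ]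
  push_cast
  split_ifs <;> first | omega | ring

theorem simpleRootA_transpose_mulVec_apply {n : ℕ} (W : Fin (n + 1) → ℂ) (i : Fin n) :
    ((simpleRootA n)ᵀ *ᵥ W) i = W i.castSucc - W i.succ := by
  simp [mulVec, dotProduct, simpleRootA, sub_mul, sum_sub_distrib, ite_mul]

theorem fundamentalWeightA_castSucc_sub_succ {n : ℕ} (i j : Fin n) :
    fundamentalWeightA n i.castSucc j - fundamentalWeightA n i.succ j =
      (1 : Matrix (Fin n) (Fin n) ℂ) i j := by
  simp only [fundamentalWeightA, of_apply, one_apply, Fin.le_def, Fin.ext_iff, Fin.val_castSucc,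
    Fin.val_succ]
  split_ifs <;> first | omega | ring

theorem simpleRootA_transpose_mul_fundamentalWeightA (n : ℕ) :
    (simpleRootA n)ᵀ * fundamentalWeightA n = 1 := by
  ext i j
  change ((simpleRootA n)ᵀ *ᵥ fun k => fundamentalWeightA n k j) i = _
  rw [simpleRootA_transpose_mulVec_apply, fundamentalWeightA_castSucc_sub_succ]

theorem inv_cartanA (n : ℕ) : (cartanA n)⁻¹ = (fundamentalWeightA n)ᵀ * fundamentalWeightA n :=
  inv_eq_right_inv <| by
    rw [← Matrix.mul_assoc, cartanA_mul_fundamentalWeightA_transpose,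
      simpleRootA_transpose_mul_fundamentalWeightA]

theorem conj_fundamentalWeightA (n : ℕ) (k : Fin (n + 1)) (i : Fin n) :
    starRingEnd ℂ (fundamentalWeightA n k i) = fundamentalWeightA n k i := by
  simp [fundamentalWeightA, apply_ite]

theorem sum_fundamentalWeightA (n : ℕ) (i : Fin n) : ∑ k, fundamentalWeightA n k i = 0 := by
  simp only [fundamentalWeightA, of_apply, sum_sub_distrib, sum_boole, filter_ge_eq_Iic,
    Fin.card_Iic, Fin.val_castSucc, sum_const, card_univ, Fintype.card_fin, nsmul_eq_mul]
  push_cast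
  field_simp
  ring

theorem sum_fundamentalWeightA_mulVec {n : ℕ} (Z : Fin n → ℂ) :
    ∑ k, (fundamentalWeightA n *ᵥ Z) k = 0 := by
  simp only [mulVec, dotProduct]
  rw [sum_comm]
  simp [← sum_mul, sum_fundamentalWeightA]

theorem sum_transpose_mul_self_mul_conj {m n : Type*} [Fintype m] [Fintype n]
    (A : Matrix m n ℂ) (hA : ∀ k i, starRingEnd ℂ (A k i) = A k i) (Z : n → ℂ) :
    ∑ i, ∑ j, (Aᵀ * A) i j * Z i * starRingEnd ℂ (Z j) =
      ((∑ k, ‖(A *ᵥ Z) k‖ ^ 2 : ℝ) : ℂ) := by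
  push_cast
  simp only [← Complex.mul_conj', mulVec, dotProduct, map_sum, map_mul, hA, mul_apply,
    transpose_apply, sum_mul, mul_sum]
  refine (sum_congr rfl fun i _ => sum_comm).trans (sum_comm.trans ?_)
  exact sum_congr rfl fun k _ => sum_comm.trans <|
    sum_congr rfl fun i _ => sum_congr rfl fun j _ => by ring

theorem systolic_inequality_typeA_general (n : ℕ) (hn : 1 ≤ n) (Z : Fin n → ℂ) :
    (Finset.univ.inf' (Finset.univ_nonempty_iff.mpr ⟨⟨0, hn⟩⟩)
        (fun i : Fin n => ‖Z i‖)) ^ 2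
      ≤ (((n : ℝ) + 1) / n) *
          ‖∑ i : Fin n, ∑ j : Fin n,
            (cartanA n)⁻¹ i j * Z i * (starRingEnd ℂ) (Z j)‖ := by
  set sys := Finset.univ.inf' _ fun i : Fin n => ‖Z i‖
  rw [inv_cartanA, sum_transpose_mul_self_mul_conj _ (conj_fundamentalWeightA n),
    Complex.norm_real, Real.norm_of_nonneg (by positivity)]
  set W := fundamentalWeightA n *ᵥ Z
  have hZ : ∀ i, Z i = W i.castSucc - W i.succ := fun i => by
    rw [← simpleRootA_transpose_mulVec_apply, mulVec_mulVec,
      simpleRootA_transpose_mul_fundamentalWeightA, one_mulVec]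
  have hsys : n * sys ^ 2 ≤ ∑ i, ‖Z i‖ ^ 2 := by
    simpa using card_nsmul_le_sum univ (fun i => ‖Z i‖ ^ 2) (sys ^ 2) fun i _ =>
      pow_le_pow_left₀ (le_inf' _ _ fun _ _ => norm_nonneg _) (inf'_le _ (mem_univ i)) 2
  have hW := sum_norm_castSucc_sub_succ_sq_le W (sum_fundamentalWeightA_mulVec Z)
  simp only [← hZ] at hW
  rw [div_mul_eq_mul_div, le_div_iff₀ (by positivity)]
  linarith

theorem systolic_inequality_typeA (n : ℕ) (hn : 1 ≤ n) (Z : Fin n → ℂ)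
    (hZ : ∀ i, Z i ≠ 0) :
    (Finset.univ.inf' (Finset.univ_nonempty_iff.mpr ⟨⟨0, hn⟩⟩)
        (fun i : Fin n => ‖Z i‖)) ^ 2
      ≤ (((n : ℝ) + 1) / n) *
          ‖∑ i : Fin n, ∑ j : Fin n,
            (cartanA n)⁻¹ i j * Z i * (starRingEnd ℂ) (Z j)‖ :=
  systolic_inequality_typeA_general n hn Z
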